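/- Let V = ℝ^{2n} with standard symplectic form ω. If W₁ and W₂ are subspaces of V with dim W₁ = dim W₂ and dim(W₁ ∩ W₁^⊥) = dim(W₂ ∩ W₂^⊥), then there exists h ∈ Sp(V,ω) such that h(W₁) = W₂. In other words, the symplectic group acts transitively on subspaces of fixed dimension and fixed symplectic rank. -/

import Mathlib

/-- The standard symplectic form `ω` on `V = ℝ^{2n}`. -/
noncomputable def stdSymplectic (n : ℕ) :
    LinearMap.BilinForm ℝ ((Fin n ⊕ Fin n) → ℝ) :=
  Matrix.toBilin' (Matrix.fromBlocks 0 1 (-1) 0)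

/-!
Witt's theorem for nondegenerate alternating forms, by induction on the dimension. A hyperbolic
pair `B u v = 1` splits `V = ⟨u, v⟩ ⊕ ⟨u, v⟩^⊥`. Taking `u, v ∈ W` when `W` is not isotropic, and
just `u ∈ W` when it is, `W` splits as `(W ∩ ⟨u, v⟩) ⊕ (W ∩ ⟨u, v⟩^⊥)`, where the second summand
has the same radical as `W` in the first case and is again isotropic in the second. Hence the
dimension and the radical dimension of the two sides still match inside the complements, and the
isometry given there by induction, glued with `u₁ ↦ u₂, v₁ ↦ v₂` on the planes, carries `W₁` to
`W₂`.
-/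

open Module Submodule
open LinearMap (BilinForm)

namespace Submodule

variable {K V V₁ V₂ : Type*} [Field K] [AddCommGroup V] [Module K V]
  [AddCommGroup V₁] [Module K V₁] [AddCommGroup V₂] [Module K V₂]

lemma finrank_comap_subtype (Q W : Submodule K V) :
    finrank K (comap Q.subtype W) = finrank K ↥(Q ⊓ W) := by
  rw [← map_comap_subtype, finrank_map_subtype_eq]

lemma finrank_add_finrank_inf_of_sup_eq [FiniteDimensional K V] {A Q W : Submodule K V}
    (hAQ : Disjoint A Q) (hW : A ⊔ Q ⊓ W = W) :
    finrank K A + finrank K ↥(Q ⊓ W) = finrank K W := by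
  rw [← finrank_sup_add_finrank_inf_eq, hW, (hAQ.mono_right inf_le_left).eq_bot, finrank_bot,
    add_zero]

lemma map_eq_of_sup_inf_eq {A₁ Q₁ W₁ : Submodule K V₁} {A₂ Q₂ W₂ : Submodule K V₂}
    (g : V₁ →ₗ[K] V₂) (f : Q₁ →ₗ[K] Q₂) (hgf : ∀ w : Q₁, g w = f w) (hA : A₁.map g = A₂)
    (hf : (comap Q₁.subtype W₁).map f = comap Q₂.subtype W₂)
    (hW₁ : A₁ ⊔ Q₁ ⊓ W₁ = W₁) (hW₂ : A₂ ⊔ Q₂ ⊓ W₂ = W₂) : W₁.map g = W₂ := by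
  have hcomp : g ∘ₗ Q₁.subtype = Q₂.subtype ∘ₗ f := LinearMap.ext hgf
  calc W₁.map g = A₁.map g ⊔ ((comap Q₁.subtype W₁).map Q₁.subtype).map g := by
        rw [map_comap_subtype, ← map_sup, hW₁]
    _ = A₂ ⊔ ((comap Q₁.subtype W₁).map f).map Q₂.subtype := by
        rw [hA, ← map_comp, hcomp, map_comp]
    _ = W₂ := by rw [hf, map_comap_subtype, hW₂]

end Submodule

namespace LinearMap.BilinForm

variable {K V V₁ V₂ : Type*} [Field K] [AddCommGroup V] [Module K V]
  [AddCommGroup V₁] [Module K V₁] [AddCommGroup V₂] [Module K V₂]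

lemma comap_subtype_inf_orthogonal_restrict {B : BilinForm K V} {P W : Submodule K V}
    (hW : W ≤ P ⊔ B.orthogonal P ⊓ W) :
    comap (B.orthogonal P).subtype W ⊓
        (B.restrict (B.orthogonal P)).orthogonal (comap (B.orthogonal P).subtype W) =
      comap (B.orthogonal P).subtype (W ⊓ B.orthogonal W) := by
  ext ⟨x, hxQ⟩
  simp only [mem_inf, mem_comap, subtype_apply, mem_orthogonal_iff, restrict_apply,
    domRestrict_apply, Subtype.forall]
  refine and_congr_right fun _ => ⟨fun hx y hy => ?_, fun hx y _ hy => hx y hy⟩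
  obtain ⟨p, hp, q, hq, rfl⟩ := mem_sup.mp (hW hy)
  rw [map_add, LinearMap.add_apply, hxQ p hp, hx q hq.1 hq.2, add_zero]

lemma Nondegenerate.exists_apply_eq_one {B : BilinForm K V} (hB : B.Nondegenerate) {u : V}
    (hu : u ≠ 0) : ∃ v, B u v = 1 := by
  obtain ⟨y, hy⟩ := not_forall.mp fun h => hu (hB.1 u h)
  exact ⟨(B u y)⁻¹ • y, by rw [map_smul, smul_eq_mul, inv_mul_cancel₀ hy]⟩

lemma Nondegenerate.exists_apply_eq_one_of_nontrivial [Nontrivial V] {B : BilinForm K V}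
    (hB : B.Nondegenerate) : ∃ u v, B u v = 1 :=
  let ⟨_, hu⟩ := exists_ne (0 : V)
  ⟨_, hB.exists_apply_eq_one hu⟩

lemma exists_mem_apply_eq_one_of_not_le_orthogonal {B : BilinForm K V} {W : Submodule K V}
    (hW : ¬ W ≤ B.orthogonal W) : ∃ u ∈ W, ∃ v ∈ W, B u v = 1 := by
  obtain ⟨x, hxW, hx⟩ := SetLike.not_le_iff_exists.mp hW
  obtain ⟨y, hyW, hyx⟩ : ∃ y ∈ W, B y x ≠ 0 := by simpa [mem_orthogonal_iff] using hx
  exact ⟨y, hyW, (B y x)⁻¹ • x, smul_mem _ _ hxW,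
    by rw [map_smul, smul_eq_mul, inv_mul_cancel₀ hyx]⟩

lemma le_orthogonal_iff_finrank_inf_eq [FiniteDimensional K V] {B : BilinForm K V}
    {W : Submodule K V} : W ≤ B.orthogonal W ↔ finrank K ↥(W ⊓ B.orthogonal W) = finrank K W := by
  rw [← inf_eq_left]
  exact ⟨fun h => by rw [h], eq_of_le_of_finrank_eq inf_le_left⟩

section HyperbolicPair

variable {B : BilinForm K V} {u v : V}

lemma mem_orthogonal_span_pair_iff {x : V} :
    x ∈ B.orthogonal (span K {u, v}) ↔ B u x = 0 ∧ B v x = 0 := by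
  have : x ∈ B.orthogonal (span K {u, v}) ↔ span K {u, v} ≤ LinearMap.ker (B.flip x) := by
    simp [SetLike.le_def, mem_orthogonal_iff]
  rw [this, span_le, Set.insert_subset_iff, Set.singleton_subset_iff]
  simp

lemma IsAlt.apply_pair (hB : B.IsAlt) (huv : B u v = 1) (i j : Fin 2) :
    B (![u, v] i) (![u, v] j) = !![0, 1; -1, 0] i j := by
  fin_cases i <;> fin_cases j <;> simp [hB.self_eq_zero, huv, ← hB.neg_eq u v]

lemma IsAlt.apply_smul_add_smul (hB : B.IsAlt) (huv : B u v = 1) (a b : K) :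
    B u (a • u + b • v) = b ∧ B v (a • u + b • v) = -a := by
  simp [hB.self_eq_zero, huv, ← hB.neg_eq u v]

lemma IsAlt.linearIndependent_pair (hB : B.IsAlt) (huv : B u v = 1) :
    LinearIndependent K ![u, v] := by
  refine LinearIndependent.pair_iff.mpr fun a b hab => ?_
  obtain ⟨hb, ha⟩ := hB.apply_smul_add_smul huv a b
  rw [hab, map_zero] at ha hb
  exact ⟨neg_eq_zero.mp ha.symm, hb.symm⟩

/-- `x ↦ B x v • u + B u x • v` is the projection onto the hyperbolic plane along its
orthogonal complement. -/
lemma IsAlt.sub_mem_orthogonal_span_pair (hB : B.IsAlt) (huv : B u v = 1) (x : V) :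
    x - (B x v • u + B u x • v) ∈ B.orthogonal (span K {u, v}) := by
  rw [mem_orthogonal_span_pair_iff]
  simp only [map_sub, map_add, map_smul, smul_eq_mul, hB.self_eq_zero, huv, ← hB.neg_eq u v,
    ← hB.neg_eq x v]
  constructor <;> ring

lemma IsAlt.isCompl_span_pair (hB : B.IsAlt) (huv : B u v = 1) :
    IsCompl (span K {u, v}) (B.orthogonal (span K {u, v})) := by
  refine ⟨?_, codisjoint_iff_exists_add_eq.mpr fun x => ?_⟩
  · rw [disjoint_iff_inf_le]
    rintro x ⟨hxP, hxQ⟩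
    obtain ⟨a, b, rfl⟩ := mem_span_pair.mp hxP
    obtain ⟨hb, ha⟩ := mem_orthogonal_span_pair_iff.mp hxQ
    rw [(hB.apply_smul_add_smul huv a b).1] at hb
    rw [(hB.apply_smul_add_smul huv a b).2, neg_eq_zero] at ha
    simp [ha, hb]
  · exact ⟨_, _, mem_span_pair.mpr ⟨_, _, rfl⟩, hB.sub_mem_orthogonal_span_pair huv x,
      add_sub_cancel _ _⟩

lemma IsAlt.finrank_span_pair (hB : B.IsAlt) (huv : B u v = 1) :
    finrank K (span K {u, v}) = 2 := by
  rw [← Matrix.range_cons_cons_empty u v ![], finrank_span_eq_card (hB.linearIndependent_pair huv)]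
  simp

lemma IsAlt.finrank_orthogonal_span_pair [FiniteDimensional K V] (hB : B.IsAlt)
    (huv : B u v = 1) : finrank K (B.orthogonal (span K {u, v})) + 2 = finrank K V := by
  rw [← hB.finrank_span_pair huv, add_comm,
    Submodule.finrank_add_eq_of_isCompl (hB.isCompl_span_pair huv)]

lemma IsAlt.nondegenerate_restrict_orthogonal_span_pair [FiniteDimensional K V] (hB : B.IsAlt)
    (hnd : B.Nondegenerate) (huv : B u v = 1) :
    (B.restrict (B.orthogonal (span K {u, v}))).Nondegenerate := by
  refine B.nondegenerate_restrict_of_disjoint_orthogonal hB.isRefl ?_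
  rw [orthogonal_orthogonal hnd hB.isRefl]
  exact (hB.isCompl_span_pair huv).disjoint.symm

lemma IsAlt.exists_basis_span_pair (hB : B.IsAlt) (huv : B u v = 1) :
    ∃ b : Basis (Fin 2) K (span K {u, v}), ∀ i, (b i : V) = ![u, v] i :=
  ⟨(Basis.span (hB.linearIndependent_pair huv)).map
      (LinearEquiv.ofEq _ _ (by rw [Matrix.range_cons_cons_empty])),
    fun i => by simp [Basis.span_apply]⟩

lemma IsAlt.sup_inf_orthogonal_span_pair_eq (hB : B.IsAlt) (huv : B u v = 1)
    {A W : Submodule K V} (hAW : A ≤ W) (hproj : ∀ w ∈ W, B w v • u + B u w • v ∈ A) :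
    A ⊔ B.orthogonal (span K {u, v}) ⊓ W = W := by
  refine le_antisymm (sup_le hAW inf_le_right) fun w hw => mem_sup.mpr ?_
  exact ⟨_, hproj w hw, _, ⟨hB.sub_mem_orthogonal_span_pair huv w, sub_mem hw (hAW (hproj w hw))⟩,
    add_sub_cancel _ _⟩

lemma IsAlt.exists_split_of_le_orthogonal [FiniteDimensional K V] (hB : B.IsAlt)
    (hnd : B.Nondegenerate) {W : Submodule K V} (hW : W ≠ ⊥) (hiso : W ≤ B.orthogonal W) :
    ∃ u v, B u v = 1 ∧ span K {u} ⊔ B.orthogonal (span K {u, v}) ⊓ W = W ∧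
      finrank K ↥(B.orthogonal (span K {u, v}) ⊓ W) + 1 = finrank K W := by
  obtain ⟨u, huW, hu⟩ := exists_mem_ne_zero_of_ne_bot hW
  obtain ⟨v, huv⟩ := hnd.exists_apply_eq_one hu
  have hsplit := hB.sup_inf_orthogonal_span_pair_eq huv ((span_singleton_le_iff_mem _ _).mpr huW)
    fun w hw => by
      rw [hiso hw u huW, zero_smul, add_zero]
      exact smul_mem _ _ (mem_span_singleton_self u)
  refine ⟨u, v, huv, hsplit, ?_⟩
  rw [← finrank_add_finrank_inf_of_sup_eq
    ((hB.isCompl_span_pair huv).disjoint.mono_left (span_mono (by simp))) hsplit,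
    finrank_span_singleton hu, add_comm]

lemma IsAlt.exists_split_of_not_le_orthogonal [FiniteDimensional K V] (hB : B.IsAlt)
    {W : Submodule K V} (hiso : ¬ W ≤ B.orthogonal W) :
    ∃ u v, B u v = 1 ∧ span K {u, v} ⊔ B.orthogonal (span K {u, v}) ⊓ W = W ∧
      finrank K ↥(B.orthogonal (span K {u, v}) ⊓ W) + 2 = finrank K W ∧
      W ⊓ B.orthogonal W ≤ B.orthogonal (span K {u, v}) := by
  obtain ⟨u, huW, v, hvW, huv⟩ := exists_mem_apply_eq_one_of_not_le_orthogonal hiso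
  have hPW : span K {u, v} ≤ W := span_le.mpr (Set.insert_subset huW (by simpa using hvW))
  have hsplit := hB.sup_inf_orthogonal_span_pair_eq huv hPW
    fun w _ => mem_span_pair.mpr ⟨_, _, rfl⟩
  refine ⟨u, v, huv, hsplit, ?_, inf_le_right.trans (orthogonal_le hPW)⟩
  rw [← finrank_add_finrank_inf_of_sup_eq (hB.isCompl_span_pair huv).disjoint hsplit,
    hB.finrank_span_pair huv, add_comm]

end HyperbolicPair

lemma IsRefl.apply_add_add_of_mem_orthogonal {B : BilinForm K V} (hB : B.IsRefl)
    {A : Submodule K V} {a a' w w' : V} (ha : a ∈ A) (ha' : a' ∈ A)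
    (hw : w ∈ B.orthogonal A) (hw' : w' ∈ B.orthogonal A) :
    B (a + w) (a' + w') = B a a' + B w w' := by
  have h₁ : B a w' = 0 := hw' a ha
  have h₂ : B w a' = 0 := hB _ _ (hw a' ha')
  simp only [map_add, LinearMap.add_apply, h₁, h₂, add_zero, zero_add]

section Isometry

variable {B₁ : BilinForm K V₁} {B₂ : BilinForm K V₂}

lemma exists_isometryEquiv_of_isCompl_orthogonal (hB₁ : B₁.IsRefl) (hB₂ : B₂.IsRefl)
    {A₁ : Submodule K V₁} {A₂ : Submodule K V₂}
    (hA₁ : IsCompl A₁ (B₁.orthogonal A₁)) (hA₂ : IsCompl A₂ (B₂.orthogonal A₂))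
    (e : (B₁.restrict A₁).IsometryEquiv (B₂.restrict A₂))
    (f : (B₁.restrict (B₁.orthogonal A₁)).IsometryEquiv (B₂.restrict (B₂.orthogonal A₂))) :
    ∃ g : B₁.IsometryEquiv B₂, (∀ a : A₁, g a = e a) ∧ ∀ w : B₁.orthogonal A₁, g w = f w := by
  let π₁ := A₁.prodEquivOfIsCompl _ hA₁
  let π₂ := A₂.prodEquivOfIsCompl _ hA₂
  let g : V₁ ≃ₗ[K] V₂ := π₁.symm ≪≫ₗ (e.toLinearEquiv.prodCongr f.toLinearEquiv) ≪≫ₗ π₂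
  have hg : ∀ (a : A₁) (w : B₁.orthogonal A₁), g (a + w) = e a + f w := fun a w => by
    simp [g, π₁, π₂]
  refine ⟨⟨g, fun x y => ?_⟩, fun a => (by simpa using hg a 0 : g a = e a),
    fun w => (by simpa using hg 0 w : g w = f w)⟩
  obtain ⟨⟨a, w⟩, rfl⟩ := π₁.surjective x
  obtain ⟨⟨a', w'⟩, rfl⟩ := π₁.surjective y
  simp only [π₁, coe_prodEquivOfIsCompl', LinearEquiv.toFun_eq_coe, hg]
  rw [hB₂.apply_add_add_of_mem_orthogonal (e a).2 (e a').2 (f w).2 (f w').2,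
    hB₁.apply_add_add_of_mem_orthogonal a.2 a'.2 w.2 w'.2]
  exact congr_arg₂ (· + ·) (e.map_app a' a) (f.map_app w' w)

lemma IsAlt.exists_isometryEquiv_extend (hB₁ : B₁.IsAlt) (hB₂ : B₂.IsAlt)
    {u₁ v₁ : V₁} {u₂ v₂ : V₂} (huv₁ : B₁ u₁ v₁ = 1) (huv₂ : B₂ u₂ v₂ = 1)
    (f : (B₁.restrict (B₁.orthogonal (span K {u₁, v₁}))).IsometryEquiv
      (B₂.restrict (B₂.orthogonal (span K {u₂, v₂})))) :
    ∃ g : B₁.IsometryEquiv B₂, g u₁ = u₂ ∧ g v₁ = v₂ ∧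
      ∀ w : B₁.orthogonal (span K {u₁, v₁}), g w = f w := by
  obtain ⟨b₁, hb₁⟩ := hB₁.exists_basis_span_pair huv₁
  obtain ⟨b₂, hb₂⟩ := hB₂.exists_basis_span_pair huv₂
  let e₀ := b₁.equiv b₂ (Equiv.refl _)
  have he₀ : (B₂.restrict _).compl₁₂ e₀.toLinearMap e₀.toLinearMap = B₁.restrict _ :=
    ext_basis b₁ fun i j => by
      simp [e₀, hb₁, hb₂, hB₁.apply_pair huv₁, hB₂.apply_pair huv₂]
  obtain ⟨g, hge, hgf⟩ := exists_isometryEquiv_of_isCompl_orthogonal hB₁.isRefl hB₂.isRefl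
    (hB₁.isCompl_span_pair huv₁) (hB₂.isCompl_span_pair huv₂)
    ⟨e₀, fun x y => LinearMap.congr_fun₂ he₀ x y⟩ f
  have hg (i : Fin 2) : g (![u₁, v₁] i) = ![u₂, v₂] i := by
    rw [← hb₁, hge, ← hb₂]
    exact congrArg Subtype.val (b₁.equiv_apply i b₂ (Equiv.refl _))
  exact ⟨g, hg 0, hg 1, hgf⟩

lemma IsAlt.exists_isometryEquiv_map_eq_of_sup_inf_eq (hB₁ : B₁.IsAlt) (hB₂ : B₂.IsAlt)
    {u₁ v₁ : V₁} {u₂ v₂ : V₂} (huv₁ : B₁ u₁ v₁ = 1) (huv₂ : B₂ u₂ v₂ = 1)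
    {A₁ W₁ : Submodule K V₁} {A₂ W₂ : Submodule K V₂}
    (hA₁ : A₁ ≤ span K {u₁, v₁}) (hA₂ : A₂ ≤ span K {u₂, v₂})
    (hW₁ : A₁ ⊔ B₁.orthogonal (span K {u₁, v₁}) ⊓ W₁ = W₁)
    (hW₂ : A₂ ⊔ B₂.orthogonal (span K {u₂, v₂}) ⊓ W₂ = W₂)
    (hA : ∀ g : V₁ ≃ₗ[K] V₂, g u₁ = u₂ → g v₁ = v₂ → A₁.map (g : V₁ →ₗ[K] V₂) = A₂)
    (hdim : finrank K ↥(B₁.orthogonal (span K {u₁, v₁}) ⊓ W₁) =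
      finrank K ↥(B₂.orthogonal (span K {u₂, v₂}) ⊓ W₂))
    (hrk : finrank K ↥(B₁.orthogonal (span K {u₁, v₁}) ⊓ (W₁ ⊓ B₁.orthogonal W₁)) =
      finrank K ↥(B₂.orthogonal (span K {u₂, v₂}) ⊓ (W₂ ⊓ B₂.orthogonal W₂)))
    (IH : ∀ (W₁' : Submodule K (B₁.orthogonal (span K {u₁, v₁})))
      (W₂' : Submodule K (B₂.orthogonal (span K {u₂, v₂}))), finrank K W₁' = finrank K W₂' →
      finrank K ↥(W₁' ⊓ (B₁.restrict _).orthogonal W₁') =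
        finrank K ↥(W₂' ⊓ (B₂.restrict _).orthogonal W₂') →
      ∃ f : (B₁.restrict _).IsometryEquiv (B₂.restrict _), W₁'.map f.toLinearMap = W₂') :
    ∃ g : B₁.IsometryEquiv B₂, W₁.map g.toLinearMap = W₂ := by
  obtain ⟨f, hf⟩ := IH (comap (B₁.orthogonal _).subtype W₁) (comap (B₂.orthogonal _).subtype W₂)
    (by rw [finrank_comap_subtype, finrank_comap_subtype, hdim])
    (by rw [comap_subtype_inf_orthogonal_restrict (hW₁.ge.trans (sup_le_sup_right hA₁ _)),
      comap_subtype_inf_orthogonal_restrict (hW₂.ge.trans (sup_le_sup_right hA₂ _)),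
      finrank_comap_subtype, finrank_comap_subtype, hrk])
  obtain ⟨g, hgu, hgv, hgf⟩ := hB₁.exists_isometryEquiv_extend hB₂ huv₁ huv₂ f
  exact ⟨g, map_eq_of_sup_inf_eq g.toLinearMap f.toLinearMap hgf (hA g.toLinearEquiv hgu hgv)
    hf hW₁ hW₂⟩

end Isometry

theorem IsAlt.exists_isometryEquiv_map_eq {B₁ : BilinForm K V₁} {B₂ : BilinForm K V₂}
    [FiniteDimensional K V₁] [FiniteDimensional K V₂]
    (hB₁ : B₁.IsAlt) (hB₂ : B₂.IsAlt) (hnd₁ : B₁.Nondegenerate) (hnd₂ : B₂.Nondegenerate)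
    (hV : finrank K V₁ = finrank K V₂) {W₁ : Submodule K V₁} {W₂ : Submodule K V₂}
    (hdim : finrank K W₁ = finrank K W₂)
    (hrk : finrank K ↥(W₁ ⊓ B₁.orthogonal W₁) = finrank K ↥(W₂ ⊓ B₂.orthogonal W₂)) :
    ∃ g : B₁.IsometryEquiv B₂, W₁.map g.toLinearMap = W₂ := by
  induction hN : finrank K V₁ using Nat.strong_induction_on generalizing V₁ V₂ with
  | _ N IH =>
  have IH' {u₁ v₁ : V₁} {u₂ v₂ : V₂} (huv₁ : B₁ u₁ v₁ = 1) (huv₂ : B₂ u₂ v₂ = 1) W₁' W₂' hd hr :=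
    have hQ₁ := hB₁.finrank_orthogonal_span_pair huv₁
    have hQ₂ := hB₂.finrank_orthogonal_span_pair huv₂
    IH _ (by omega) (B₁ := B₁.restrict (B₁.orthogonal (span K {u₁, v₁})))
      (B₂ := B₂.restrict (B₂.orthogonal (span K {u₂, v₂}))) (fun x => hB₁ x) (fun x => hB₂ x)
      (hB₁.nondegenerate_restrict_orthogonal_span_pair hnd₁ huv₁)
      (hB₂.nondegenerate_restrict_orthogonal_span_pair hnd₂ huv₂) (by omega)
      (W₁ := W₁') (W₂ := W₂') hd hr rfl
  have hbot : W₁ = ⊥ ↔ W₂ = ⊥ := by rw [← finrank_eq_zero, ← finrank_eq_zero, hdim]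
  have hiso : W₁ ≤ B₁.orthogonal W₁ ↔ W₂ ≤ B₂.orthogonal W₂ := by
    rw [le_orthogonal_iff_finrank_inf_eq, le_orthogonal_iff_finrank_inf_eq, hdim, hrk]
  rcases eq_or_ne W₁ ⊥ with rfl | hW₁
  · obtain rfl := hbot.mp rfl
    rcases subsingleton_or_nontrivial V₁ with _ | _
    · have : Subsingleton V₂ := finrank_zero_iff.mp (by rw [← hV, finrank_zero_of_subsingleton])
      exact ⟨⟨LinearEquiv.ofSubsingleton V₁ V₂, fun x y => by simp [Subsingleton.elim x 0]⟩,
        by simp⟩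
    have : Nontrivial V₂ := finrank_pos_iff.mp (hV ▸ finrank_pos)
    obtain ⟨u₁, v₁, huv₁⟩ := hnd₁.exists_apply_eq_one_of_nontrivial
    obtain ⟨u₂, v₂, huv₂⟩ := hnd₂.exists_apply_eq_one_of_nontrivial
    obtain ⟨f, -⟩ := IH' huv₁ huv₂ ⊥ ⊥ (by rw [finrank_bot, finrank_bot])
      (by rw [bot_inf_eq, bot_inf_eq, finrank_bot, finrank_bot])
    obtain ⟨g, -⟩ := hB₁.exists_isometryEquiv_extend hB₂ huv₁ huv₂ f
    exact ⟨g, map_bot _⟩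
  by_cases hiso₁ : W₁ ≤ B₁.orthogonal W₁
  · have hiso₂ := hiso.mp hiso₁
    obtain ⟨u₁, v₁, huv₁, hsplit₁, hdim₁⟩ := hB₁.exists_split_of_le_orthogonal hnd₁ hW₁ hiso₁
    obtain ⟨u₂, v₂, huv₂, hsplit₂, hdim₂⟩ :=
      hB₂.exists_split_of_le_orthogonal hnd₂ (mt hbot.mpr hW₁) hiso₂
    have hdimQ : finrank K ↥(B₁.orthogonal (span K {u₁, v₁}) ⊓ W₁) =
        finrank K ↥(B₂.orthogonal (span K {u₂, v₂}) ⊓ W₂) := by omega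
    refine hB₁.exists_isometryEquiv_map_eq_of_sup_inf_eq hB₂ huv₁ huv₂ (span_mono (by simp))
      (span_mono (by simp)) hsplit₁ hsplit₂ (fun g hgu _ => ?_) hdimQ ?_ (IH' huv₁ huv₂)
    · rw [map_span, Set.image_singleton, LinearEquiv.coe_coe, hgu]
    · rwa [inf_eq_left.mpr hiso₁, inf_eq_left.mpr hiso₂]
  · obtain ⟨u₁, v₁, huv₁, hsplit₁, hdim₁, hrad₁⟩ :=
      hB₁.exists_split_of_not_le_orthogonal hiso₁
    obtain ⟨u₂, v₂, huv₂, hsplit₂, hdim₂, hrad₂⟩ :=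
      hB₂.exists_split_of_not_le_orthogonal (mt hiso.mpr hiso₁)
    refine hB₁.exists_isometryEquiv_map_eq_of_sup_inf_eq hB₂ huv₁ huv₂ le_rfl le_rfl
      hsplit₁ hsplit₂ (fun g hgu hgv => ?_) (by omega) ?_ (IH' huv₁ huv₂)
    · rw [map_span, Set.image_pair, LinearEquiv.coe_coe, hgu, hgv]
    · rwa [inf_eq_right.mpr hrad₁, inf_eq_right.mpr hrad₂]

end LinearMap.BilinForm

lemma stdSymplectic_apply (n : ℕ) (x y : (Fin n ⊕ Fin n) → ℝ) :
    stdSymplectic n x y = ∑ i, (x (Sum.inl i) * y (Sum.inr i) - x (Sum.inr i) * y (Sum.inl i)) := by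
  simp [stdSymplectic, Matrix.toBilin'_apply', dotProduct, Matrix.mulVec, Matrix.fromBlocks,
    Fintype.sum_sum_type, Matrix.one_apply, mul_comm, sub_eq_add_neg,
    Finset.sum_add_distrib, Finset.sum_neg_distrib]

lemma stdSymplectic_isAlt (n : ℕ) : (stdSymplectic n).IsAlt := fun x => by
  simp [stdSymplectic_apply, mul_comm]

lemma stdSymplectic_nondegenerate (n : ℕ) : (stdSymplectic n).Nondegenerate := by
  refine (stdSymplectic_isAlt n).isRefl.nondegenerate_iff_separatingLeft.mpr fun x hx => ?_
  funext i
  rcases i with i | i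
  · simpa [stdSymplectic_apply, Pi.single_apply] using hx (Pi.single (Sum.inr i) 1)
  · simpa [stdSymplectic_apply, Pi.single_apply] using hx (Pi.single (Sum.inl i) 1)

/-- `Sp(V,ω)` acts transitively on subspaces of fixed dimension and fixed symplectic
rank: if `dim W₁ = dim W₂` and `dim (W₁ ∩ W₁^⊥) = dim (W₂ ∩ W₂^⊥)`, there is a
symplectic automorphism `h` with `h(W₁) = W₂`. -/
theorem stmt_2 (n : ℕ) (W₁ W₂ : Submodule ℝ ((Fin n ⊕ Fin n) → ℝ))
    (hdim : Module.finrank ℝ ↥W₁ = Module.finrank ℝ ↥W₂)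
    (hrk : Module.finrank ℝ ↥(W₁ ⊓ (stdSymplectic n).orthogonal W₁) =
      Module.finrank ℝ ↥(W₂ ⊓ (stdSymplectic n).orthogonal W₂)) :
    ∃ h : ((Fin n ⊕ Fin n) → ℝ) ≃ₗ[ℝ] ((Fin n ⊕ Fin n) → ℝ),
      (∀ v w, stdSymplectic n (h v) (h w) = stdSymplectic n v w) ∧
      W₁.map (h : ((Fin n ⊕ Fin n) → ℝ) →ₗ[ℝ] ((Fin n ⊕ Fin n) → ℝ)) = W₂ := by
  obtain ⟨g, hg⟩ := (stdSymplectic_isAlt n).exists_isometryEquiv_map_eq (stdSymplectic_isAlt n)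
    (stdSymplectic_nondegenerate n) (stdSymplectic_nondegenerate n) rfl hdim hrk
  exact ⟨g.toLinearEquiv, fun v w => g.map_app w v, hg⟩
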